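/- arXiv:1207.3395 — 10 statements merged into one kernel-verified Lean document; each statement's English description precedes it below -/
import Mathlib

section
/- Let (x1, x2, x3) ∈ ℂ³ satisfy |x1 - conj(x2)·x3| + |x2 - conj(x1)·x3| < 1 - |x3|², and |x1 + z·x2| < 2 for all z with |z| = 1. Then for every z on the unit circle, the point (s, p) = (x1 + z·x2, z·x3) satisfies |s - conj(s)·p| < 1 - |p|² and |s| < 2. -/
open ComplexConjugate

lemma add_mul_sub_conj_mul_mul_eq {z : ℂ} (hz : ‖z‖ = 1) (x1 x2 x3 : ℂ) :
    (x1 + z * x2) - conj (x1 + z * x2) * (z * x3)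
      = (x1 - conj x2 * x3) + z * (x2 - conj x1 * x3) := by
  have hzz : z * conj z = 1 := by
    rw [Complex.mul_conj', hz]
    norm_num
  simp only [map_add, map_mul]
  linear_combination (-(conj x2 * x3)) * hzz

lemma norm_add_mul_sub_conj_mul_mul_le {z : ℂ} (hz : ‖z‖ = 1) (x1 x2 x3 : ℂ) :
    ‖(x1 + z * x2) - conj (x1 + z * x2) * (z * x3)‖
      ≤ ‖x1 - conj x2 * x3‖ + ‖x2 - conj x1 * x3‖ :=
  calc _ = ‖(x1 - conj x2 * x3) + z * (x2 - conj x1 * x3)‖ := by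
        rw [add_mul_sub_conj_mul_mul_eq hz]
    _ ≤ ‖x1 - conj x2 * x3‖ + ‖z * (x2 - conj x1 * x3)‖ := norm_add_le _ _
    _ = ‖x1 - conj x2 * x3‖ + ‖x2 - conj x1 * x3‖ := by rw [norm_mul, hz, one_mul]

theorem stmt_1 (x1 x2 x3 : ℂ)
    (h1 : ‖x1 - conj x2 * x3‖ + ‖x2 - conj x1 * x3‖
        < 1 - ‖x3‖ ^ 2)
    (h2 : ∀ z : ℂ, ‖z‖ = 1 → ‖x1 + z * x2‖ < 2) :
    ∀ z : ℂ, ‖z‖ = 1 →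
      ‖(x1 + z * x2) - conj (x1 + z * x2) * (z * x3)‖
          < 1 - ‖z * x3‖ ^ 2 ∧
        ‖x1 + z * x2‖ < 2 := by
  intro z hz
  have hp : ‖z * x3‖ = ‖x3‖ := by rw [norm_mul, hz, one_mul]
  exact ⟨hp ▸ (norm_add_mul_sub_conj_mul_mul_le hz x1 x2 x3).trans_lt h1, h2 z hz⟩
end

section
/- Let (x1, x2, x3) ∈ ℂ³ with |x3| < 1. Suppose for every z with |z| = 1 the pair (s_z, p_z) = (x1 + z·x2, z·x3) satisfies |s_z - conj(s_z)·p_z| < 1 - |p_z|². Define β1 = (x1 - conj(x2)·x3)/(1 - |x3|²) and β2 = (x2 - conj(x1)·x3)/(1 - |x3|²). Then |β1| + |β2| < 1. -/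
/-!
On the unit circle the hypothesis reads `‖(x1 - x̄2 x3) + z (x2 - x̄1 x3)‖ < 1 - ‖x3‖²`,
i.e. `‖β1 + z β2‖ < 1` for every unimodular `z`. Rotating `β2` onto the ray of `β1`
makes the triangle inequality an equality, so `‖β1‖ + ‖β2‖ < 1`.
-/

open ComplexConjugate

namespace Complex

theorem exists_norm_eq_one_norm_add_mul_eq (a b : ℂ) :
    ∃ z : ℂ, ‖z‖ = 1 ∧ ‖a + z * b‖ = ‖a‖ + ‖b‖ := by
  set α := arg a
  set β := arg b
  refine ⟨exp ((α - β : ℝ) * I), norm_exp_ofReal_mul_I _, ?_⟩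
  have hrot :
      a + exp ((α - β : ℝ) * I) * b = ((‖a‖ + ‖b‖ : ℝ) : ℂ) * exp (α * I) :=
    calc a + exp ((α - β : ℝ) * I) * b
        = ‖a‖ * exp (α * I) + exp ((α - β : ℝ) * I) * (‖b‖ * exp (β * I)) := by
          rw [norm_mul_exp_arg_mul_I, norm_mul_exp_arg_mul_I]
      _ = ((‖a‖ + ‖b‖ : ℝ) : ℂ) * exp (α * I) := by
          rw [mul_left_comm, ← exp_add]
          push_cast
          ring_nf
  rw [hrot, norm_mul, norm_exp_ofReal_mul_I, mul_one, norm_real,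
    Real.norm_of_nonneg (by positivity)]

theorem norm_add_norm_lt_of_forall_norm_add_mul_lt {a b : ℂ} {r : ℝ}
    (h : ∀ z : ℂ, ‖z‖ = 1 → ‖a + z * b‖ < r) : ‖a‖ + ‖b‖ < r := by
  obtain ⟨z, hz, heq⟩ := exists_norm_eq_one_norm_add_mul_eq a b
  exact heq ▸ h z hz

theorem add_mul_sub_conj_mul_eq {z : ℂ} (hz : ‖z‖ = 1) (x1 x2 x3 : ℂ) :
    (x1 + z * x2) - conj (x1 + z * x2) * (z * x3) =
      (x1 - conj x2 * x3) + z * (x2 - conj x1 * x3) := by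
  have hzz : conj z * z = 1 := by
    rw [← normSq_eq_conj_mul_self, normSq_eq_norm_sq, hz]
    norm_num
  simp only [map_add, map_mul]
  linear_combination (-(conj x2 * x3)) * hzz

end Complex

theorem stmt_2 (x1 x2 x3 : ℂ) (h3 : ‖x3‖ < 1)
    (h : ∀ z : ℂ, ‖z‖ = 1 →
      ‖(x1 + z * x2) - conj (x1 + z * x2) * (z * x3)‖
        < 1 - ‖z * x3‖ ^ 2)
    (β1 β2 : ℂ)
    (hβ1 : β1 = (x1 - conj x2 * x3) / ((1 : ℂ) - ((‖x3‖ : ℝ) : ℂ) ^ 2))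
    (hβ2 : β2 = (x2 - conj x1 * x3) / ((1 : ℂ) - ((‖x3‖ : ℝ) : ℂ) ^ 2)) :
    ‖β1‖ + ‖β2‖ < 1 := by
  set d : ℝ := 1 - ‖x3‖ ^ 2
  have hd : 0 < d := sub_pos.2 (pow_lt_one₀ (norm_nonneg x3) h3 two_ne_zero)
  have hdc : (1 : ℂ) - ((‖x3‖ : ℝ) : ℂ) ^ 2 = (d : ℂ) := by push_cast [d]; ring
  rw [hdc] at hβ1 hβ2
  refine Complex.norm_add_norm_lt_of_forall_norm_add_mul_lt fun z hz => ?_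
  have hsum : β1 + z * β2 = ((x1 + z * x2) - conj (x1 + z * x2) * (z * x3)) / d := by
    rw [Complex.add_mul_sub_conj_mul_eq hz, hβ1, hβ2]
    ring
  have hz3 : ‖z * x3‖ = ‖x3‖ := by rw [norm_mul, hz, one_mul]
  rw [hsum, norm_div, Complex.norm_real, Real.norm_of_nonneg hd.le, div_lt_one hd]
  simpa only [hz3] using h z hz
end

section
/- Let F1 and F2 be bounded operators on a complex Hilbert space such that the numerical radius w(z1·F1 + z2·F2) ≤ 1 for all complex z1, z2 with |z1| = |z2| = 1. Then w(F1 + z·F2*) ≤ 1 for every z with |z| = 1. -/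
/-!
Rotating the two terms by suitable phases shows `‖⟪F1 x, x⟫‖ + ‖⟪F2 x, x⟫‖ ≤ ‖x‖²`. Since
`⟪F2† x, x⟫` is the conjugate of `⟪F2 x, x⟫`, the triangle inequality then bounds
`‖⟪(F1 + z • F2†) x, x⟫‖` by the same sum.
-/

open ContinuousLinearMap Complex ComplexConjugate

lemma exists_norm_eq_one_conj_mul_eq_norm (c : ℂ) : ∃ u : ℂ, ‖u‖ = 1 ∧ conj u * c = ‖c‖ := by
  refine ⟨exp (arg c * I), norm_exp_ofReal_mul_I _, ?_⟩
  conv_lhs => rw [← norm_mul_exp_arg_mul_I c]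
  rw [← exp_conj, map_mul, conj_ofReal, conj_I, mul_left_comm, ← exp_add]
  simp

lemma norm_add_norm_le_of_forall_norm_eq_one {a b : ℂ} {r : ℝ}
    (h : ∀ z₁ z₂ : ℂ, ‖z₁‖ = 1 → ‖z₂‖ = 1 → ‖conj z₁ * a + conj z₂ * b‖ ≤ r) :
    ‖a‖ + ‖b‖ ≤ r := by
  obtain ⟨u₁, hu₁, ha⟩ := exists_norm_eq_one_conj_mul_eq_norm a
  obtain ⟨u₂, hu₂, hb⟩ := exists_norm_eq_one_conj_mul_eq_norm b
  have := h u₁ u₂ hu₁ hu₂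
  rwa [ha, hb, ← ofReal_add, norm_real, Real.norm_of_nonneg (by positivity)] at this

lemma norm_add_mul_conj_le {a b w : ℂ} (hw : ‖w‖ = 1) : ‖a + w * conj b‖ ≤ ‖a‖ + ‖b‖ := by
  simpa [hw] using norm_add_le a (w * conj b)

section Adjoint

variable {𝕜 E : Type*} [RCLike 𝕜] [NormedAddCommGroup E] [InnerProductSpace 𝕜 E] [CompleteSpace E]

lemma inner_adjoint_apply_self (A : E →L[𝕜] E) (x : E) :
    inner 𝕜 (adjoint A x) x = conj (inner 𝕜 (A x) x) := by
  rw [adjoint_inner_left, inner_conj_symm]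

end Adjoint

theorem stmt_4 {H : Type*} [NormedAddCommGroup H] [InnerProductSpace ℂ H] [CompleteSpace H]
    (F1 F2 : H →L[ℂ] H)
    (h : ∀ z1 z2 : ℂ, ‖z1‖ = 1 → ‖z2‖ = 1 →
      ∀ x : H, ‖(inner ℂ ((z1 • F1 + z2 • F2) x) x : ℂ)‖ ≤ ‖x‖ ^ 2) :
    ∀ z : ℂ, ‖z‖ = 1 →
      ∀ x : H, ‖(inner ℂ ((F1 + z • adjoint F2) x) x : ℂ)‖ ≤ ‖x‖ ^ 2 := by
  intro z hz x
  have hsum : ‖inner ℂ (F1 x) x‖ + ‖inner ℂ (F2 x) x‖ ≤ ‖x‖ ^ 2 :=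
    norm_add_norm_le_of_forall_norm_eq_one fun z₁ z₂ h₁ h₂ => by
      simpa only [add_apply, smul_apply, inner_add_left, inner_smul_left] using h z₁ z₂ h₁ h₂ x
  calc ‖inner ℂ ((F1 + z • adjoint F2) x) x‖
      = ‖inner ℂ (F1 x) x + conj z * conj (inner ℂ (F2 x) x)‖ := by
        rw [add_apply, smul_apply, inner_add_left, inner_smul_left, inner_adjoint_apply_self]
    _ ≤ ‖x‖ ^ 2 := (norm_add_mul_conj_le (by rwa [RCLike.norm_conj])).trans hsum
end

section
/- Let P be a contraction on a Hilbert space H with defect operator D_P = (I - P*P)^{1/2}, and let Y be a bounded operator satisfying Y·D_P + Y*·D_P·P = 0. Then D_P·Y·D_P = 0. -/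
/-!
Conjugating the hypothesis by its adjoint shows that `D Y D = P* (D Y D) P`, hence
`D Y D = P*ⁿ (D Y D) Pⁿ` for every `n`, so `‖D Y D x‖ ≤ ‖D Y‖ ‖D Pⁿ x‖`. Since
`‖D z‖² = ‖z‖² - ‖P z‖²`, the terms `‖D Pⁿ x‖²` are the successive decrements of the
nonincreasing sequence `‖Pⁿ x‖²`, so they tend to zero.
-/

open ContinuousLinearMap Filter Topology

theorem eq_star_mul_mul_of_add_eq_zero {R : Type*} [Ring R] [StarRing R] {p d y : R}
    (hd : IsSelfAdjoint d) (hy : y * d + star y * d * p = 0) :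
    d * y * d = star p * (d * y * d) * p := by
  have hyd : y * d = -(star y * d * p) := eq_neg_of_add_eq_zero_left hy
  have hdy : d * star y = -(star p * d * y) := by
    have := congrArg star hy
    simp only [star_add, star_mul, star_star, hd.star_eq, star_zero] at this
    exact eq_neg_of_add_eq_zero_left (by simpa only [mul_assoc] using this)
  calc d * y * d = -(d * star y) * (d * p) := by rw [mul_assoc, hyd]; noncomm_ring
    _ = star p * (d * y * d) * p := by rw [hdy]; noncomm_ring

theorem eq_pow_mul_mul_pow_of_eq_mul_mul {M : Type*} [Monoid M] {a b c : M}
    (h : a = b * a * c) (n : ℕ) : a = b ^ n * a * c ^ n := by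
  induction n with
  | zero => simp
  | succ n ih =>
    calc a = b ^ n * (b * a * c) * c ^ n := by rw [← h, ← ih]
      _ = b ^ (n + 1) * a * c ^ (n + 1) := by simp only [pow_succ b, pow_succ' c, mul_assoc]

section Contraction

variable {𝕜 E : Type*} [NontriviallyNormedField 𝕜] [SeminormedAddCommGroup E]
  [NormedSpace 𝕜 E] {P : E →L[𝕜] E}

theorem norm_apply_le_of_norm_le_one (hP : ‖P‖ ≤ 1) (x : E) : ‖P x‖ ≤ ‖x‖ :=
  (P.le_of_opNorm_le hP x).trans_eq (one_mul _)

theorem norm_pow_apply_le_of_norm_le_one (hP : ‖P‖ ≤ 1) (n : ℕ) (x : E) :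
    ‖(P ^ n) x‖ ≤ ‖x‖ := by
  induction n with
  | zero => simp
  | succ n ih =>
    rw [pow_succ', mul_apply_eq_comp]
    exact (norm_apply_le_of_norm_le_one hP _).trans ih

end Contraction

section Defect

variable {𝕜 H : Type*} [RCLike 𝕜] [NormedAddCommGroup H] [InnerProductSpace 𝕜 H]
  [CompleteSpace H] {P D : H →L[𝕜] H}

theorem norm_sq_apply_eq_sub_of_mul_self_eq (hD : IsSelfAdjoint D)
    (hDP : D * D = 1 - adjoint P * P) (z : H) :
    ‖D z‖ ^ 2 = ‖z‖ ^ 2 - ‖P z‖ ^ 2 := by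
  rw [apply_norm_sq_eq_inner_adjoint_left, apply_norm_sq_eq_inner_adjoint_left,
    ← star_eq_adjoint, hD.star_eq]
  change RCLike.re (inner 𝕜 ((D * D) z) z) = _
  rw [hDP, sub_apply, one_apply_eq_self, inner_sub_left, map_sub, inner_self_eq_norm_sq]
  rfl

theorem tendsto_norm_apply_pow_apply_atTop_zero (hP : ‖P‖ ≤ 1) (hD : IsSelfAdjoint D)
    (hDP : D * D = 1 - adjoint P * P) (x : H) :
    Tendsto (fun n : ℕ => ‖D ((P ^ n) x)‖) atTop (𝓝 0) := by
  set u : ℕ → ℝ := fun n => ‖(P ^ n) x‖ ^ 2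
  have hu_anti : Antitone u := antitone_nat_of_succ_le fun n =>
    pow_le_pow_left₀ (norm_nonneg _) (by
      rw [pow_succ', mul_apply_eq_comp]; exact norm_apply_le_of_norm_le_one hP _) 2
  have hu_conv := tendsto_atTop_ciInf hu_anti ⟨0, by rintro _ ⟨n, rfl⟩; positivity⟩
  have hdecr : Tendsto (fun n => u n - u (n + 1)) atTop (𝓝 0) := by
    simpa using hu_conv.sub (hu_conv.comp (tendsto_add_atTop_nat 1))
  have hsq : (fun n : ℕ => ‖D ((P ^ n) x)‖ ^ 2) = fun n => u n - u (n + 1) := by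
    ext n
    simp only [u, norm_sq_apply_eq_sub_of_mul_self_eq hD hDP, pow_succ' P, mul_apply_eq_comp]
  rw [← hsq] at hdecr
  simpa only [Real.sqrt_sq (norm_nonneg _), Real.sqrt_zero] using hdecr.sqrt

end Defect

theorem stmt_6 {H : Type*} [NormedAddCommGroup H] [InnerProductSpace ℂ H] [CompleteSpace H]
    (P D Y : H →L[ℂ] H) (hP : ‖P‖ ≤ 1)
    (hDpos : D.IsPositive) (hD : D * D = 1 - adjoint P * P)
    (hY : Y * D + adjoint Y * D * P = 0) :
    D * Y * D = 0 := by
  have hDsa : IsSelfAdjoint D := hDpos.isSelfAdjoint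
  have hconj : ∀ n : ℕ, D * Y * D = star P ^ n * (D * Y * D) * P ^ n :=
    eq_pow_mul_mul_pow_of_eq_mul_mul
      (eq_star_mul_mul_of_add_eq_zero hDsa (by rwa [star_eq_adjoint]))
  ext x
  have hbound : ∀ n : ℕ, ‖(D * Y * D) x‖ ≤ ‖D * Y‖ * ‖D ((P ^ n) x)‖ := fun n => by
    calc ‖(D * Y * D) x‖ = ‖(star P ^ n) ((D * Y) (D ((P ^ n) x)))‖ := by
          rw [hconj n]; simp only [mul_apply_eq_comp]
      _ ≤ ‖(D * Y) (D ((P ^ n) x))‖ :=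
          norm_pow_apply_le_of_norm_le_one (by rwa [norm_star]) n _
      _ ≤ ‖D * Y‖ * ‖D ((P ^ n) x)‖ := le_opNorm _ _
  have hlim := (tendsto_norm_apply_pow_apply_atTop_zero hP hDsa hD x).const_mul ‖D * Y‖
  rw [mul_zero] at hlim
  exact norm_le_zero_iff.mp (ge_of_tendsto' hlim hbound)
end

section
/- Let S and P be commuting bounded operators on a Hilbert space with P a contraction, and suppose Φ is a bounded operator on the closure of the range of D_P satisfying S − S*P = D_P·Φ·D_P and D_P·S = Φ·D_P + Φ*·D_P·P. If X is any bounded operator on the closure of the range of D_P satisfying D_P·S = X·D_P + X*·D_P·P, then X = Φ. -/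
open ContinuousLinearMap Filter Topology

/-!
For `Y = X - Φ` the two equations give `Y D + Y† D P = 0`, which makes the form
`(x, y) ↦ ⟪D y, Y D x⟫` invariant under `(x, y) ↦ (P x, P y)`. From `D² = 1 - P† P` we get
`‖P z‖² + ‖D z‖² = ‖z‖²`, so `∑ ‖D Pⁿ x‖²` telescopes and `D Pⁿ x → 0`; hence the form vanishes.
Then `Y D x` lies in the closure of the range of `D` and is orthogonal to it, so `Y D = 0`, and `Y`
vanishes on that closure and on its orthogonal complement.
-/

section Defect

variable {𝕜 E F : Type*} [RCLike 𝕜] [NormedAddCommGroup E] [InnerProductSpace 𝕜 E]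
  [NormedAddCommGroup F] [InnerProductSpace 𝕜 F]

theorem norm_sq_add_norm_sq_of_mul_self_eq_one_sub [CompleteSpace E] {P D : E →L[𝕜] E}
    (hDsa : IsSelfAdjoint D) (hD : D * D = 1 - adjoint P * P) (z : E) :
    ‖P z‖ ^ 2 + ‖D z‖ ^ 2 = ‖z‖ ^ 2 := by
  have hDz : ‖D z‖ ^ 2 = RCLike.re (inner 𝕜 ((D * D) z) z) := by
    rw [apply_norm_sq_eq_inner_adjoint_left, hDsa.adjoint_eq]; rfl
  have hPz : ‖P z‖ ^ 2 = RCLike.re (inner 𝕜 ((adjoint P * P) z) z) :=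
    apply_norm_sq_eq_inner_adjoint_left P z
  rw [hDz, hPz, hD, sub_apply, one_apply_eq_self, inner_sub_left, map_sub,
    inner_self_eq_norm_sq]
  ring

variable {P : E →L[𝕜] E} {D : E →L[𝕜] F}

theorem sum_range_norm_sq_add_norm_sq_pow_apply
    (hPD : ∀ z, ‖P z‖ ^ 2 + ‖D z‖ ^ 2 = ‖z‖ ^ 2) (x : E) (N : ℕ) :
    ∑ n ∈ Finset.range N, ‖D ((P ^ n) x)‖ ^ 2 + ‖(P ^ N) x‖ ^ 2 = ‖x‖ ^ 2 := by
  induction N with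
  | zero => simp
  | succ N ih =>
    rw [Finset.sum_range_succ, ← ih, pow_succ' P, mul_apply_eq_comp, ← hPD ((P ^ N) x)]
    ring

theorem tendsto_norm_apply_pow_apply_zero (hPD : ∀ z, ‖P z‖ ^ 2 + ‖D z‖ ^ 2 = ‖z‖ ^ 2)
    (x : E) : Tendsto (fun n ↦ ‖D ((P ^ n) x)‖) atTop (𝓝 0) := by
  have hsum : Summable fun n ↦ ‖D ((P ^ n) x)‖ ^ 2 :=
    summable_of_sum_range_le (c := ‖x‖ ^ 2) (fun n ↦ by positivity) fun N ↦ by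
      rw [← sum_range_norm_sq_add_norm_sq_pow_apply hPD x N]
      exact le_add_of_nonneg_right (by positivity)
  simpa [Real.sqrt_sq (norm_nonneg _)] using hsum.tendsto_atTop_zero.sqrt

variable [CompleteSpace F] {Y : F →L[𝕜] F}

theorem inner_apply_map_apply_eq_of_add_adjoint (hY : ∀ z, Y (D z) + adjoint Y (D (P z)) = 0)
    (x y : E) :
    inner 𝕜 (D y) (Y (D x)) = inner 𝕜 (D (P y)) (Y (D (P x))) := by
  have hYD : ∀ z, Y (D z) = -adjoint Y (D (P z)) := fun z ↦
    eq_neg_of_add_eq_zero_left (hY z)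
  rw [hYD x, inner_neg_right, adjoint_inner_right, hYD y, inner_neg_left, neg_neg,
    adjoint_inner_left]

theorem inner_apply_map_apply_eq_zero (hPD : ∀ z, ‖P z‖ ^ 2 + ‖D z‖ ^ 2 = ‖z‖ ^ 2)
    (hY : ∀ z, Y (D z) + adjoint Y (D (P z)) = 0) (x y : E) : inner 𝕜 (D y) (Y (D x)) = 0 := by
  have hinv : ∀ n : ℕ,
      inner 𝕜 (D y) (Y (D x)) = inner 𝕜 (D ((P ^ n) y)) (Y (D ((P ^ n) x))) := by
    intro n
    induction n with
    | zero => simp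
    | succ n ih =>
      rw [ih, inner_apply_map_apply_eq_of_add_adjoint hY, pow_succ', mul_apply_eq_comp,
        mul_apply_eq_comp]
  have hbound : ∀ n : ℕ,
      ‖inner 𝕜 (D y) (Y (D x))‖ ≤ ‖D ((P ^ n) y)‖ * (‖Y‖ * ‖D ((P ^ n) x)‖) :=
    fun n ↦ (hinv n).symm ▸ (norm_inner_le_norm _ _).trans (by gcongr; exact Y.le_opNorm _)
  have hlim := (tendsto_norm_apply_pow_apply_zero hPD y).mul
    ((tendsto_norm_apply_pow_apply_zero hPD x).const_mul ‖Y‖)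
  rw [mul_zero, mul_zero] at hlim
  exact norm_le_zero_iff.mp (ge_of_tendsto' hlim hbound)

end Defect

theorem ContinuousLinearMap.eq_zero_of_le_ker_of_orthogonal_le_ker {𝕜 E F : Type*} [RCLike 𝕜]
    [NormedAddCommGroup E] [InnerProductSpace 𝕜 E] [CompleteSpace E] [NormedAddCommGroup F]
    [NormedSpace 𝕜 F] {Y : E →L[𝕜] F} {K : Submodule 𝕜 E}
    (hK : K ≤ LinearMap.ker (Y : E →ₗ[𝕜] F)) (hK' : Kᗮ ≤ LinearMap.ker (Y : E →ₗ[𝕜] F)) :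
    Y = 0 := by
  have hclosure : K.topologicalClosure ≤ LinearMap.ker (Y : E →ₗ[𝕜] F) :=
    K.topologicalClosure_minimal hK Y.isClosed_ker
  have : CompleteSpace K.topologicalClosure := K.isClosed_topologicalClosure.completeSpace_coe
  have htop := K.topologicalClosure.sup_orthogonal_of_hasOrthogonalProjection
  rw [K.orthogonal_closure] at htop
  exact coe_inj.mp (LinearMap.ker_eq_top.mp (top_le_iff.mp (htop ▸ sup_le hclosure hK')))

theorem stmt_8_general {H : Type*} [NormedAddCommGroup H] [InnerProductSpace ℂ H] [CompleteSpace H]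
    (S P D : H →L[ℂ] H)
    (hDpos : D.IsPositive) (hD : D * D = 1 - adjoint P * P)
    (𝒟 : Submodule ℂ H) (h𝒟 : 𝒟 = (LinearMap.range (D : H →ₗ[ℂ] H)).topologicalClosure)
    (Φ X : H →L[ℂ] H)
    (hΦmem : ∀ x : H, Φ x ∈ 𝒟) (hXmem : ∀ x : H, X x ∈ 𝒟)
    (hΦker : ∀ x ∈ 𝒟ᗮ, Φ x = 0) (hXker : ∀ x ∈ 𝒟ᗮ, X x = 0)
    (hΦeq : D * S = Φ * D + adjoint Φ * D * P)
    (hXeq : D * S = X * D + adjoint X * D * P) :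
    X = Φ := by
  set K := LinearMap.range (D : H →ₗ[ℂ] H)
  set Y := X - Φ
  have hPD := norm_sq_add_norm_sq_of_mul_self_eq_one_sub hDpos.isSelfAdjoint hD
  have hY : Y * D + adjoint Y * D * P = 0 := by
    rw [map_sub, sub_mul, sub_mul, sub_mul, ← add_sub_add_comm, ← hXeq, ← hΦeq, sub_self]
  have hK : K ≤ LinearMap.ker (Y : H →ₗ[ℂ] H) := by
    rintro _ ⟨x, rfl⟩
    have hmem : Y (D x) ∈ 𝒟 := sub_mem (hXmem _) (hΦmem _)
    have hperp : Y (D x) ∈ 𝒟ᗮ := by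
      rw [h𝒟, Submodule.orthogonal_closure, Submodule.mem_orthogonal']
      rintro _ ⟨y, rfl⟩
      rw [inner_eq_zero_symm]
      exact inner_apply_map_apply_eq_zero hPD (fun z ↦ by simpa using congr($hY z)) x y
    exact Submodule.disjoint_def.mp 𝒟.orthogonal_disjoint _ hmem hperp
  have hKperp : Kᗮ ≤ LinearMap.ker (Y : H →ₗ[ℂ] H) := by
    intro z hz
    rw [← Submodule.orthogonal_closure, ← h𝒟] at hz
    simp [Y, hXker z hz, hΦker z hz]
  exact sub_eq_zero.mp (eq_zero_of_le_ker_of_orthogonal_le_ker hK hKperp)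

/-- Operators on the closure of the range of `D_P` are identified with operators on `H` that
map into that closure and vanish on its orthogonal complement. -/
theorem stmt_8 {H : Type*} [NormedAddCommGroup H] [InnerProductSpace ℂ H] [CompleteSpace H]
    (S P D : H →L[ℂ] H) (hSP : S * P = P * S) (hP : ‖P‖ ≤ 1)
    (hDpos : D.IsPositive) (hD : D * D = 1 - adjoint P * P)
    (𝒟 : Submodule ℂ H) (h𝒟 : 𝒟 = (LinearMap.range (D : H →ₗ[ℂ] H)).topologicalClosure)
    (Φ X : H →L[ℂ] H)
    (hΦmem : ∀ x : H, Φ x ∈ 𝒟) (hXmem : ∀ x : H, X x ∈ 𝒟)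
    (hΦker : ∀ x ∈ 𝒟ᗮ, Φ x = 0) (hXker : ∀ x ∈ 𝒟ᗮ, X x = 0)
    (hfund : S - adjoint S * P = D * Φ * D)
    (hΦeq : D * S = Φ * D + adjoint Φ * D * P)
    (hXeq : D * S = X * D + adjoint X * D * P) :
    X = Φ :=
  stmt_8_general S P D hDpos hD 𝒟 h𝒟 Φ X hΦmem hXmem hΦker hXker hΦeq hXeq
end

section
/- Let S1, S2, P be commuting bounded operators on a Hilbert space with P a contraction. Suppose Φ1, Φ2 are bounded operators satisfying S_i − S_i*P = D_P·Φ_i·D_P and D_P·S_i = Φ_i·D_P + Φ_i*·D_P·P for i = 1, 2, and suppose Φ1·Φ2 = Φ2·Φ1. Then S1*·S2 − S2*·S1 = D_P·(Φ1*·Φ2 − Φ2*·Φ1)·D_P. -/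
open ContinuousLinearMap

/-! Commutativity of `S₁, S₂` gives `S₂*(S₁ - DΦ₁D) = S₂*S₁*P = S₁*S₂*P = S₁*(S₂ - DΦ₂D)`, so
`S₁*S₂ - S₂*S₁ = S₁*DΦ₂D - S₂*DΦ₁D`. Taking adjoints in `DSᵢ = ΦᵢD + Φᵢ*DP` rewrites `Sᵢ*D` as
`DΦᵢ* + P*DΦᵢ`, and the `P*D(Φ₁Φ₂ - Φ₂Φ₁)D` term left over vanishes because `Φ₁, Φ₂` commute. The
argument only uses the star-ring structure of the bounded operators. -/

section StarRing

variable {R : Type*} [Ring R] [StarRing R]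

theorem Commute.star_mul_sub_star_mul_eq {S₁ S₂ : R} (h : Commute S₁ S₂) (P : R) :
    star S₁ * S₂ - star S₂ * S₁
      = star S₁ * (S₂ - star S₂ * P) - star S₂ * (S₁ - star S₁ * P) := by
  rw [mul_sub, mul_sub, ← mul_assoc, ← mul_assoc, h.star_star.eq]
  abel

theorem IsSelfAdjoint.star_mul_eq_of_mul_eq {D S Φ P : R} (hD : IsSelfAdjoint D)
    (h : D * S = Φ * D + star Φ * D * P) : star S * D = D * star Φ + star P * D * Φ := by
  simpa only [star_mul, star_add, star_star, hD.star_eq, mul_assoc] using congrArg star h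

theorem star_mul_sub_star_mul_eq_of_fundamental {S₁ S₂ P D Φ₁ Φ₂ : R}
    (h₁₂ : Commute S₁ S₂) (hD : IsSelfAdjoint D)
    (hf₁ : S₁ - star S₁ * P = D * Φ₁ * D) (hf₂ : S₂ - star S₂ * P = D * Φ₂ * D)
    (he₁ : D * S₁ = Φ₁ * D + star Φ₁ * D * P) (he₂ : D * S₂ = Φ₂ * D + star Φ₂ * D * P)
    (hΦ : Commute Φ₁ Φ₂) :
    star S₁ * S₂ - star S₂ * S₁ = D * (star Φ₁ * Φ₂ - star Φ₂ * Φ₁) * D := by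
  have hS₁ := hD.star_mul_eq_of_mul_eq he₁
  have hS₂ := hD.star_mul_eq_of_mul_eq he₂
  calc star S₁ * S₂ - star S₂ * S₁
      = star S₁ * D * Φ₂ * D - star S₂ * D * Φ₁ * D := by
        rw [h₁₂.star_mul_sub_star_mul_eq P, hf₁, hf₂]; noncomm_ring
    _ = D * (star Φ₁ * Φ₂ - star Φ₂ * Φ₁) * D + star P * D * (Φ₁ * Φ₂ - Φ₂ * Φ₁) * D := by
        rw [hS₁, hS₂]; noncomm_ring
    _ = D * (star Φ₁ * Φ₂ - star Φ₂ * Φ₁) * D := by rw [hΦ.eq, sub_self]; simp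

end StarRing

theorem stmt_9_general {H : Type*} [NormedAddCommGroup H] [InnerProductSpace ℂ H] [CompleteSpace H]
    (S1 S2 P D : H →L[ℂ] H)
    (h12 : S1 * S2 = S2 * S1)
    (hDpos : D.IsPositive)
    (Φ1 Φ2 : H →L[ℂ] H)
    (hf1 : S1 - adjoint S1 * P = D * Φ1 * D)
    (hf2 : S2 - adjoint S2 * P = D * Φ2 * D)
    (he1 : D * S1 = Φ1 * D + adjoint Φ1 * D * P)
    (he2 : D * S2 = Φ2 * D + adjoint Φ2 * D * P)
    (hΦ : Φ1 * Φ2 = Φ2 * Φ1) :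
    adjoint S1 * S2 - adjoint S2 * S1 = D * (adjoint Φ1 * Φ2 - adjoint Φ2 * Φ1) * D := by
  simp only [← star_eq_adjoint] at *
  exact star_mul_sub_star_mul_eq_of_fundamental h12 hDpos.isSelfAdjoint hf1 hf2 he1 he2 hΦ

theorem stmt_9 {H : Type*} [NormedAddCommGroup H] [InnerProductSpace ℂ H] [CompleteSpace H]
    (S1 S2 P D : H →L[ℂ] H)
    (h12 : S1 * S2 = S2 * S1) (h1P : S1 * P = P * S1) (h2P : S2 * P = P * S2)
    (hP : ‖P‖ ≤ 1)
    (hDpos : D.IsPositive) (hD : D * D = 1 - adjoint P * P)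
    (Φ1 Φ2 : H →L[ℂ] H)
    (hf1 : S1 - adjoint S1 * P = D * Φ1 * D)
    (hf2 : S2 - adjoint S2 * P = D * Φ2 * D)
    (he1 : D * S1 = Φ1 * D + adjoint Φ1 * D * P)
    (he2 : D * S2 = Φ2 * D + adjoint Φ2 * D * P)
    (hΦ : Φ1 * Φ2 = Φ2 * Φ1) :
    adjoint S1 * S2 - adjoint S2 * S1 = D * (adjoint Φ1 * Φ2 - adjoint Φ2 * Φ1) * D :=
  stmt_9_general S1 S2 P D h12 hDpos Φ1 Φ2 hf1 hf2 he1 he2 hΦ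
end

section
/- Let V1, V2, V3 be commuting bounded operators on a Hilbert space H with V1 = V2*·V3 and V2 = V1*·V3. Then the block operator B1 = [[0, V1], [V2, 0]] on H ⊕ H is hyponormal, i.e., B1·B1* ≤ B1*·B1. -/
/-!
Hyponormality `B₁ B₁* ≤ B₁* B₁` amounts to `‖B₁* x‖ ≤ ‖B₁ x‖` for every `x`. The adjoint of the
antidiagonal block operator `[[0, V₁], [V₂, 0]]` is `[[0, V₂*], [V₁*, 0]]`, so componentwise it
suffices that `‖V₁* a‖ ≤ ‖V₂ a‖` and `‖V₂* a‖ ≤ ‖V₁ a‖`. Both follow from `V₁ = V₂* V₃`,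
`V₂ = V₁* V₃`: e.g. `V₁* = V₃* V₂` and `V₃*` is a contraction.
-/

open ContinuousLinearMap
open scoped InnerProductSpace

/-- The 2×2 block operator `[[A, B], [C, D]]` acting on the Hilbert space `H ⊕₂ H`. -/
noncomputable def blockOp {H : Type*} [NormedAddCommGroup H] [InnerProductSpace ℂ H]
    (A B C D : H →L[ℂ] H) : WithLp 2 (H × H) →L[ℂ] WithLp 2 (H × H) :=
  (WithLp.prodContinuousLinearEquiv 2 ℂ H H).symm.toContinuousLinearMap ∘L
    (((A ∘L fst ℂ H H) + (B ∘L snd ℂ H H)).prod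
      ((C ∘L fst ℂ H H) + (D ∘L snd ℂ H H))) ∘L
    (WithLp.prodContinuousLinearEquiv 2 ℂ H H).toContinuousLinearMap

namespace ContinuousLinearMap

variable {𝕜 E F G : Type*} [RCLike 𝕜]
  [NormedAddCommGroup E] [InnerProductSpace 𝕜 E] [CompleteSpace E]
  [NormedAddCommGroup F] [InnerProductSpace 𝕜 F] [CompleteSpace F]
  [NormedAddCommGroup G] [InnerProductSpace 𝕜 G] [CompleteSpace G]

theorem isPositive_adjoint_mul_sub_mul_adjoint_of_norm_adjoint_apply_le {T : E →L[𝕜] E}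
    (h : ∀ x, ‖adjoint T x‖ ≤ ‖T x‖) : (adjoint T * T - T * adjoint T).IsPositive := by
  refine isPositive_def'.mpr ⟨?_, fun x => ?_⟩
  · rw [← star_eq_adjoint]
    exact (IsSelfAdjoint.star_mul_self T).sub (IsSelfAdjoint.mul_star_self T)
  have hT : ‖T x‖ ^ 2 = RCLike.re ⟪(adjoint T * T) x, x⟫_𝕜 :=
    apply_norm_sq_eq_inner_adjoint_left T x
  have hT' : ‖adjoint T x‖ ^ 2 = RCLike.re ⟪(T * adjoint T) x, x⟫_𝕜 := by
    simpa using apply_norm_sq_eq_inner_adjoint_left (adjoint T) x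
  have hsq : ‖adjoint T x‖ ^ 2 ≤ ‖T x‖ ^ 2 := by gcongr; exact h x
  rw [reApplyInnerSelf, sub_apply, inner_sub_left, map_sub, ← hT, ← hT']
  linarith

theorem norm_adjoint_adjoint_comp_apply_le {V : G →L[𝕜] F} (hV : ‖V‖ ≤ 1) (U : E →L[𝕜] F)
    (a : E) : ‖adjoint (adjoint U ∘L V) a‖ ≤ ‖U a‖ := by
  rw [adjoint_comp, adjoint_adjoint]
  calc ‖adjoint V (U a)‖ ≤ ‖adjoint V‖ * ‖U a‖ := le_opNorm _ _
    _ ≤ ‖U a‖ := by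
      rw [LinearIsometryEquiv.norm_map]
      exact mul_le_of_le_one_left (norm_nonneg _) hV

end ContinuousLinearMap

section BlockOp

variable {H : Type*} [NormedAddCommGroup H] [InnerProductSpace ℂ H]

@[simp]
theorem blockOp_fst (A B C D : H →L[ℂ] H) (x : WithLp 2 (H × H)) :
    (blockOp A B C D x).fst = A x.fst + B x.snd := rfl

@[simp]
theorem blockOp_snd (A B C D : H →L[ℂ] H) (x : WithLp 2 (H × H)) :
    (blockOp A B C D x).snd = C x.fst + D x.snd := rfl

theorem norm_sq_blockOp_antidiag_apply (B C : H →L[ℂ] H) (x : WithLp 2 (H × H)) :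
    ‖blockOp 0 B C 0 x‖ ^ 2 = ‖B x.snd‖ ^ 2 + ‖C x.fst‖ ^ 2 := by
  simp [WithLp.prod_norm_sq_eq_of_L2]

theorem adjoint_blockOp_antidiag [CompleteSpace H] (B C : H →L[ℂ] H) :
    adjoint (blockOp 0 B C 0) = blockOp 0 (adjoint C) (adjoint B) 0 := by
  refine ((eq_adjoint_iff _ _).mpr fun x y => ?_).symm
  simp [WithLp.prod_inner_apply, adjoint_inner_left, add_comm]

end BlockOp

theorem stmt_13_general {H : Type*} [NormedAddCommGroup H] [InnerProductSpace ℂ H] [CompleteSpace H]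
    (V1 V2 V3 : H →L[ℂ] H)
    (hV3 : ‖V3‖ ≤ 1)
    (h1 : V1 = adjoint V2 * V3) (h2 : V2 = adjoint V1 * V3)
    (B1 : WithLp 2 (H × H) →L[ℂ] WithLp 2 (H × H))
    (hB1 : B1 = blockOp 0 V1 V2 0) :
    (adjoint B1 * B1 - B1 * adjoint B1).IsPositive := by
  refine isPositive_adjoint_mul_sub_mul_adjoint_of_norm_adjoint_apply_le fun x => ?_
  have hV1 : ‖adjoint V1 x.fst‖ ≤ ‖V2 x.fst‖ :=
    h1 ▸ norm_adjoint_adjoint_comp_apply_le hV3 V2 x.fst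
  have hV2 : ‖adjoint V2 x.snd‖ ≤ ‖V1 x.snd‖ :=
    h2 ▸ norm_adjoint_adjoint_comp_apply_le hV3 V1 x.snd
  have hsq : ‖adjoint B1 x‖ ^ 2 ≤ ‖B1 x‖ ^ 2 := by
    rw [hB1, adjoint_blockOp_antidiag, norm_sq_blockOp_antidiag_apply,
      norm_sq_blockOp_antidiag_apply]
    gcongr
  exact le_of_sq_le_sq hsq (norm_nonneg _)

theorem stmt_13 {H : Type*} [NormedAddCommGroup H] [InnerProductSpace ℂ H] [CompleteSpace H]
    (V1 V2 V3 : H →L[ℂ] H)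
    (h12 : V1 * V2 = V2 * V1) (h13 : V1 * V3 = V3 * V1) (h23 : V2 * V3 = V3 * V2)
    (hV3 : ‖V3‖ ≤ 1)
    (h1 : V1 = adjoint V2 * V3) (h2 : V2 = adjoint V1 * V3)
    (B1 : WithLp 2 (H × H) →L[ℂ] WithLp 2 (H × H))
    (hB1 : B1 = blockOp 0 V1 V2 0) :
    (adjoint B1 * B1 - B1 * adjoint B1).IsPositive :=
  stmt_13_general V1 V2 V3 hV3 h1 h2 B1 hB1
end

section
/- Let V1, V2, V3 be commuting bounded operators on a Hilbert space with V3 an isometry, V1 = V2*·V3, and spectral radii r(V1) ≤ 1 and r(V2) ≤ 1. Then ‖V1‖ ≤ 1 and ‖V2‖ ≤ 1. -/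
/-!
Since `V3` is an isometry and `V1 = V2* V3`, we get `‖V1* y‖ ≤ ‖V2 y‖` and `‖V2* y‖ ≤ ‖V1 y‖`,
hence `‖V1 x‖² ≤ ‖P x‖ ‖x‖` and `‖V2 x‖² ≤ ‖P x‖ ‖x‖` for `P = V1 V2`. These two inequalities make
`P` paranormal, `‖P x‖² ≤ ‖P² x‖ ‖x‖`, so `n ↦ ‖Pⁿ‖` is log-convex and `‖Pⁿ‖ = ‖P‖ⁿ`. Gelfand's
formula then gives `‖P‖ = r(P) ≤ r(V1) r(V2) ≤ 1`, and finally `‖Vi‖² ≤ ‖P‖ ≤ 1`.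
-/

open ContinuousLinearMap Filter
open scoped ENNReal InnerProductSpace

lemma spectrum.spectralRadius_ne_top {A : Type*} [NormedRing A] [NormedAlgebra ℂ A]
    [CompleteSpace A] (a : A) : spectralRadius ℂ a ≠ ∞ :=
  ((spectralRadius_le_pow_nnnorm_pow_one_div ℂ a 0).trans_lt (by simp [ENNReal.mul_lt_top])).ne

lemma Commute.spectralRadius_mul_le {A : Type*} [NormedRing A] [NormedAlgebra ℂ A]
    [CompleteSpace A] {a b : A} (hab : Commute a b) :
    spectralRadius ℂ (a * b) ≤ spectralRadius ℂ a * spectralRadius ℂ b := by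
  refine le_of_tendsto_of_tendsto' (spectrum.pow_nnnorm_pow_one_div_tendsto_nhds_spectralRadius _)
    (ENNReal.Tendsto.mul (spectrum.pow_nnnorm_pow_one_div_tendsto_nhds_spectralRadius a)
      (.inr (spectrum.spectralRadius_ne_top b))
      (spectrum.pow_nnnorm_pow_one_div_tendsto_nhds_spectralRadius b)
      (.inr (spectrum.spectralRadius_ne_top a))) fun n => ?_
  rw [hab.mul_pow, ← ENNReal.mul_rpow_of_nonneg _ _ (by positivity)]
  gcongr
  exact_mod_cast nnnorm_mul_le _ _

section OpNorm

variable {𝕜 E F G : Type*} [NontriviallyNormedField 𝕜] [SeminormedAddCommGroup E]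
  [NormedSpace 𝕜 E] [SeminormedAddCommGroup F] [NormedSpace 𝕜 F] [SeminormedAddCommGroup G]
  [NormedSpace 𝕜 G]

lemma ContinuousLinearMap.opNorm_sq_le_of_forall {A : E →L[𝕜] F} {C : ℝ} (hC : 0 ≤ C)
    (h : ∀ x, ‖A x‖ ^ 2 ≤ C * ‖x‖ ^ 2) : ‖A‖ ^ 2 ≤ C := by
  refine (Real.le_sqrt (norm_nonneg _) hC).mp <| A.opNorm_le_bound (Real.sqrt_nonneg C) fun x => ?_
  rw [← Real.sqrt_sq (norm_nonneg x), ← Real.sqrt_mul hC]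
  exact Real.le_sqrt_of_sq_le (h x)

lemma ContinuousLinearMap.opNorm_sq_le_of_norm_apply_sq_le {A : E →L[𝕜] F} {B : E →L[𝕜] G}
    (h : ∀ x, ‖A x‖ ^ 2 ≤ ‖B x‖ * ‖x‖) : ‖A‖ ^ 2 ≤ ‖B‖ :=
  opNorm_sq_le_of_forall (norm_nonneg B) fun x =>
    calc ‖A x‖ ^ 2 ≤ ‖B x‖ * ‖x‖ := h x
      _ ≤ ‖B‖ * ‖x‖ * ‖x‖ := by gcongr; exact B.le_opNorm x
      _ = ‖B‖ * ‖x‖ ^ 2 := by ring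

lemma ContinuousLinearMap.norm_pow_le_pow_norm (T : E →L[𝕜] E) (n : ℕ) : ‖T ^ n‖ ≤ ‖T‖ ^ n := by
  rcases n with _ | n
  · rw [pow_zero, pow_zero]
    exact norm_id_le
  · exact norm_pow_le' T n.succ_pos

end OpNorm

section Paranormal

variable {𝕜 E : Type*} [NontriviallyNormedField 𝕜] [SeminormedAddCommGroup E] [NormedSpace 𝕜 E]

def ContinuousLinearMap.IsParanormal (T : E →L[𝕜] E) : Prop :=
  ∀ x, ‖T x‖ ^ 2 ≤ ‖T (T x)‖ * ‖x‖

namespace ContinuousLinearMap.IsParanormal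

variable {T : E →L[𝕜] E}

lemma norm_pow_succ_sq_le (hT : T.IsParanormal) (n : ℕ) :
    ‖T ^ (n + 1)‖ ^ 2 ≤ ‖T ^ (n + 2)‖ * ‖T ^ n‖ := by
  refine opNorm_sq_le_of_forall (by positivity) fun x => ?_
  calc ‖(T ^ (n + 1)) x‖ ^ 2 = ‖T ((T ^ n) x)‖ ^ 2 := by rw [pow_succ' T n]; rfl
    _ ≤ ‖T (T ((T ^ n) x))‖ * ‖(T ^ n) x‖ := hT _
    _ = ‖(T ^ (n + 2)) x‖ * ‖(T ^ n) x‖ := by rw [pow_succ' T (n + 1), pow_succ' T n]; rfl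
    _ ≤ ‖T ^ (n + 2)‖ * ‖x‖ * (‖T ^ n‖ * ‖x‖) := by gcongr <;> exact le_opNorm _ _
    _ = ‖T ^ (n + 2)‖ * ‖T ^ n‖ * ‖x‖ ^ 2 := by ring

lemma norm_pow_succ (hT : T.IsParanormal) (n : ℕ) : ‖T ^ (n + 1)‖ = ‖T‖ ^ (n + 1) := by
  refine le_antisymm (norm_pow_le_pow_norm T _) ?_
  induction n with
  | zero => simp
  | succ n ih =>
    rcases (norm_nonneg T).eq_or_lt with hT0 | hTpos
    · rw [← hT0, zero_pow n.succ.succ_ne_zero]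
      exact norm_nonneg _
    refine le_of_mul_le_mul_left ?_ (pow_pos hTpos n)
    calc ‖T‖ ^ n * ‖T‖ ^ (n + 2) = (‖T‖ ^ (n + 1)) ^ 2 := by ring
      _ ≤ ‖T ^ (n + 1)‖ ^ 2 := by gcongr
      _ ≤ ‖T ^ (n + 2)‖ * ‖T ^ n‖ := hT.norm_pow_succ_sq_le n
      _ ≤ ‖T ^ (n + 2)‖ * ‖T‖ ^ n := by gcongr; exact norm_pow_le_pow_norm T n
      _ = ‖T‖ ^ n * ‖T ^ (n + 2)‖ := mul_comm _ _

end ContinuousLinearMap.IsParanormal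

lemma ContinuousLinearMap.isParanormal_mul_of_commute {A B : E →L[𝕜] E} (hAB : Commute A B)
    (hA : ∀ x, ‖A x‖ ^ 2 ≤ ‖(A * B) x‖ * ‖x‖) (hB : ∀ x, ‖B x‖ ^ 2 ≤ ‖(A * B) x‖ * ‖x‖) :
    (A * B).IsParanormal := by
  intro x
  set P := A * B
  have hBP : P (B x) = B (P x) := by
    change (A * B * B) x = (B * (A * B)) x
    rw [hAB.eq, mul_assoc, hAB.eq]
  have h₁ : ‖P x‖ ^ 2 ≤ ‖B (P x)‖ * ‖B x‖ := hBP ▸ hA (B x)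
  have h₂ := hB (P x)
  have h₃ := hB x
  rcases (norm_nonneg (P x)).eq_or_lt with h0 | hpos
  · rw [← h0, zero_pow two_ne_zero]
    positivity
  refine le_of_mul_le_mul_right ?_ (pow_pos hpos 2)
  calc ‖P x‖ ^ 2 * ‖P x‖ ^ 2 ≤ (‖B (P x)‖ * ‖B x‖) ^ 2 := by nlinarith
    _ = ‖B (P x)‖ ^ 2 * ‖B x‖ ^ 2 := by ring
    _ ≤ (‖P (P x)‖ * ‖P x‖) * (‖P x‖ * ‖x‖) := by gcongr
    _ = ‖P (P x)‖ * ‖x‖ * ‖P x‖ ^ 2 := by ring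

end Paranormal

lemma ContinuousLinearMap.IsParanormal.spectralRadius_eq_nnnorm {E : Type*}
    [NormedAddCommGroup E] [NormedSpace ℂ E] [CompleteSpace E] {T : E →L[ℂ] E}
    (hT : T.IsParanormal) : spectralRadius ℂ T = ‖T‖₊ := by
  refine tendsto_nhds_unique (spectrum.pow_nnnorm_pow_one_div_tendsto_nhds_spectralRadius T)
    (tendsto_const_nhds.congr' ?_)
  filter_upwards [eventually_ge_atTop 1] with n hn
  obtain ⟨m, rfl⟩ := Nat.exists_eq_add_of_le' hn
  have hnorm : ‖T ^ (m + 1)‖₊ = ‖T‖₊ ^ (m + 1) := NNReal.eq (by simpa using hT.norm_pow_succ m)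
  rw [hnorm, ENNReal.coe_pow, ← ENNReal.rpow_natCast, ← ENNReal.rpow_mul,
    mul_one_div_cancel (by positivity), ENNReal.rpow_one]

section Adjoint

variable {𝕜 E F G : Type*} [RCLike 𝕜] [NormedAddCommGroup E] [InnerProductSpace 𝕜 E]
  [CompleteSpace E] [NormedAddCommGroup F] [InnerProductSpace 𝕜 F] [CompleteSpace F]
  [SeminormedAddCommGroup G] [NormedSpace 𝕜 G]

lemma ContinuousLinearMap.norm_apply_sq_le_of_norm_adjoint_le {X : E →L[𝕜] F} {Y : F →L[𝕜] G}
    (h : ∀ y, ‖adjoint X y‖ ≤ ‖Y y‖) (x : E) : ‖X x‖ ^ 2 ≤ ‖Y (X x)‖ * ‖x‖ :=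
  calc ‖X x‖ ^ 2 = RCLike.re ⟪adjoint X (X x), x⟫_𝕜 := by
        rw [adjoint_inner_left, inner_self_eq_norm_sq]
    _ ≤ ‖adjoint X (X x)‖ * ‖x‖ := (RCLike.re_le_norm _).trans (norm_inner_le_norm _ _)
    _ ≤ ‖Y (X x)‖ * ‖x‖ := by gcongr; exact h _

lemma ContinuousLinearMap.norm_adjoint_apply_le_of_adjoint_comp_self {V : E →L[𝕜] F}
    (hV : adjoint V ∘L V = .id 𝕜 E) (y : F) : ‖adjoint V y‖ ≤ ‖y‖ := by
  have hnorm : ‖V‖ * ‖V‖ ≤ 1 := by rw [← norm_adjoint_comp_self, hV]; exact norm_id_le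
  have : ‖adjoint V‖ ≤ 1 := by
    rw [LinearIsometryEquiv.norm_map]
    nlinarith [norm_nonneg V]
  simpa using (adjoint V).le_of_opNorm_le this y

end Adjoint

theorem stmt_15_general {H : Type*} [NormedAddCommGroup H] [InnerProductSpace ℂ H] [CompleteSpace H]
    (V1 V2 V3 : H →L[ℂ] H)
    (h12 : V1 * V2 = V2 * V1) (h23 : V2 * V3 = V3 * V2)
    (hiso : adjoint V3 * V3 = 1)
    (h1 : V1 = adjoint V2 * V3)
    (hr1 : spectralRadius ℂ V1 ≤ 1) (hr2 : spectralRadius ℂ V2 ≤ 1) :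
    ‖V1‖ ≤ 1 ∧ ‖V2‖ ≤ 1 := by
  have hV3 := norm_adjoint_apply_le_of_adjoint_comp_self hiso
  have hV1 : ∀ y, ‖adjoint V1 y‖ ≤ ‖V2 y‖ := fun y => by
    simp only [h1, ← star_eq_adjoint, star_mul, star_star]
    exact hV3 (V2 y)
  have hV2 : ∀ y, ‖adjoint V2 y‖ ≤ ‖V1 y‖ := fun y => by
    have : star V3 * V1 = star V2 := by
      rw [h1, ← star_eq_adjoint, ← mul_assoc, ← star_mul, h23, star_mul, mul_assoc,
        star_eq_adjoint V3, hiso, mul_one]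
    rw [← star_eq_adjoint, ← this]
    exact hV3 (V1 y)
  have hA : ∀ x, ‖V1 x‖ ^ 2 ≤ ‖(V1 * V2) x‖ * ‖x‖ := by
    rw [h12]
    exact norm_apply_sq_le_of_norm_adjoint_le hV1
  have hB : ∀ x, ‖V2 x‖ ^ 2 ≤ ‖(V1 * V2) x‖ * ‖x‖ := norm_apply_sq_le_of_norm_adjoint_le hV2
  have hP : ‖V1 * V2‖ ≤ 1 := by
    have := (isParanormal_mul_of_commute h12 hA hB).spectralRadius_eq_nnnorm ▸
      (Commute.spectralRadius_mul_le h12).trans (mul_le_one' hr1 hr2)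
    exact_mod_cast this
  have hnorm {A : H →L[ℂ] H} (hsq : ∀ x, ‖A x‖ ^ 2 ≤ ‖(V1 * V2) x‖ * ‖x‖) : ‖A‖ ≤ 1 :=
    (pow_le_one_iff_of_nonneg (norm_nonneg A) two_ne_zero).mp
      ((opNorm_sq_le_of_norm_apply_sq_le hsq).trans hP)
  exact ⟨hnorm hA, hnorm hB⟩

theorem stmt_15 {H : Type*} [NormedAddCommGroup H] [InnerProductSpace ℂ H] [CompleteSpace H]
    (V1 V2 V3 : H →L[ℂ] H)
    (h12 : V1 * V2 = V2 * V1) (h13 : V1 * V3 = V3 * V1) (h23 : V2 * V3 = V3 * V2)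
    (hiso : adjoint V3 * V3 = 1)
    (h1 : V1 = adjoint V2 * V3)
    (hr1 : spectralRadius ℂ V1 ≤ 1) (hr2 : spectralRadius ℂ V2 ≤ 1) :
    ‖V1‖ ≤ 1 ∧ ‖V2‖ ≤ 1 :=
  stmt_15_general V1 V2 V3 h12 h23 hiso h1 hr1 hr2
end

section
/- Let X be a hyponormal bounded operator on a Hilbert space (i.e., X·X* ≤ X*·X). Then ‖X^n‖ = ‖X‖^n for all n ≥ 1, and consequently the spectral radius r(X) equals ‖X‖. -/
/-! Hyponormality says `‖X† v‖ ≤ ‖X v‖`, so `‖X v‖² = re ⟪X† X v, v⟫ ≤ ‖X† X v‖ ‖v‖ ≤ ‖X² v‖ ‖v‖`.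
Applied to `v = Xⁿ w` this gives the log-convexity `‖Xⁿ⁺¹‖² ≤ ‖Xⁿ⁺²‖ ‖Xⁿ‖`, which together with
submultiplicativity forces `‖Xⁿ‖ = ‖X‖ⁿ`; Gelfand's formula then gives `r(X) = ‖X‖`. -/

open ContinuousLinearMap Filter

lemma eq_pow_of_sq_succ_le_mul {a : ℕ → ℝ} (ha : ∀ n, 0 ≤ a n) (ha₀ : a 0 ≤ 1)
    (hsub : ∀ n, a (n + 1) ≤ a 1 * a n) (hconv : ∀ n, a (n + 1) ^ 2 ≤ a (n + 2) * a n) :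
    ∀ n, 1 ≤ n → a n = a 1 ^ n := by
  have hsuper : ∀ n, a 1 * a n ≤ a (n + 1) := by
    intro n
    induction n with
    | zero => simpa using mul_le_of_le_one_right (ha 1) ha₀
    | succ n ih =>
      rcases (ha n).eq_or_lt with hn | hn
      · have : a (n + 1) = 0 := le_antisymm (by simpa [← hn] using hsub n) (ha _)
        simpa [this] using ha (n + 2)
      · refine le_of_mul_le_mul_right ?_ hn
        nlinarith [hconv n, ha (n + 1), ha 1]
  intro n hn
  induction n, hn using Nat.le_induction with
  | base => simp
  | succ n _ ih => rw [pow_succ', ← ih]; exact le_antisymm (hsub n) (hsuper n)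

theorem spectralRadius_eq_nnnorm_of_norm_pow {A : Type*} [NormedRing A] [NormedAlgebra ℂ A]
    [CompleteSpace A] {a : A} (h : ∀ n, 1 ≤ n → ‖a ^ n‖ = ‖a‖ ^ n) :
    spectralRadius ℂ a = ‖a‖₊ := by
  have hconst : ∀ᶠ n : ℕ in atTop, (‖a ^ n‖₊ : ENNReal) ^ (1 / n : ℝ) = ‖a‖₊ := by
    filter_upwards [eventually_ge_atTop 1] with n hn
    have hpow : (‖a ^ n‖₊ : ENNReal) = (‖a‖₊ : ENNReal) ^ n := by
      rw [← ENNReal.coe_pow, ENNReal.coe_inj]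
      exact NNReal.eq (by simpa using h n hn)
    rw [hpow, ← ENNReal.rpow_natCast, ← ENNReal.rpow_mul, mul_one_div_cancel (by positivity),
      ENNReal.rpow_one]
  exact tendsto_nhds_unique ((tendsto_congr' hconst).mp
    (spectrum.pow_nnnorm_pow_one_div_tendsto_nhds_spectralRadius a)) tendsto_const_nhds

theorem ContinuousLinearMap.sq_opNorm_le_of_sq_norm_apply_le {𝕜 E F : Type*}
    [NontriviallyNormedField 𝕜] [SeminormedAddCommGroup E] [SeminormedAddCommGroup F]
    [NormedSpace 𝕜 E] [NormedSpace 𝕜 F] (f : E →L[𝕜] F) {C : ℝ} (hC : 0 ≤ C)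
    (h : ∀ x, ‖f x‖ ^ 2 ≤ C * ‖x‖ ^ 2) : ‖f‖ ^ 2 ≤ C := by
  refine (Real.le_sqrt (norm_nonneg f) hC).mp (f.opNorm_le_bound (Real.sqrt_nonneg C) fun x ↦ ?_)
  rw [← pow_le_pow_iff_left₀ (norm_nonneg _) (by positivity) two_ne_zero, mul_pow,
    Real.sq_sqrt hC]
  exact h x

section InnerProductSpace

variable {𝕜 E : Type*} [RCLike 𝕜] [NormedAddCommGroup E] [InnerProductSpace 𝕜 E] [CompleteSpace E]

def ContinuousLinearMap.IsHyponormal (T : E →L[𝕜] E) : Prop :=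
  (adjoint T * T - T * adjoint T).IsPositive

theorem ContinuousLinearMap.sq_norm_apply_le_norm_adjoint_apply_mul_norm (T : E →L[𝕜] E) (x : E) :
    ‖T x‖ ^ 2 ≤ ‖adjoint T (T x)‖ * ‖x‖ := by
  rw [apply_norm_sq_eq_inner_adjoint_left]
  exact re_inner_le_norm _ _

theorem ContinuousLinearMap.IsHyponormal.norm_adjoint_apply_le {T : E →L[𝕜] E}
    (hT : T.IsHyponormal) (x : E) :
    ‖adjoint T x‖ ≤ ‖T x‖ := by
  have hdiff := hT.re_inner_nonneg_left x
  have hT' := apply_norm_sq_eq_inner_adjoint_left (adjoint T) x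
  rw [adjoint_adjoint] at hT'
  rw [sub_apply, inner_sub_left, map_sub, sub_nonneg] at hdiff
  rw [← pow_le_pow_iff_left₀ (norm_nonneg _) (norm_nonneg _) two_ne_zero, hT',
    apply_norm_sq_eq_inner_adjoint_left]
  exact hdiff

theorem ContinuousLinearMap.IsHyponormal.sq_norm_pow_succ_le {T : E →L[𝕜] E}
    (hT : T.IsHyponormal) (n : ℕ) :
    ‖T ^ (n + 1)‖ ^ 2 ≤ ‖T ^ (n + 2)‖ * ‖T ^ n‖ := by
  refine (T ^ (n + 1)).sq_opNorm_le_of_sq_norm_apply_le (by positivity) fun x ↦ ?_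
  calc ‖(T ^ (n + 1)) x‖ ^ 2 = ‖T ((T ^ n) x)‖ ^ 2 := by rw [pow_succ' T n]; rfl
    _ ≤ ‖adjoint T (T ((T ^ n) x))‖ * ‖(T ^ n) x‖ :=
      sq_norm_apply_le_norm_adjoint_apply_mul_norm T _
    _ ≤ ‖T (T ((T ^ n) x))‖ * ‖(T ^ n) x‖ := by
      gcongr; exact hT.norm_adjoint_apply_le _
    _ = ‖(T ^ (n + 2)) x‖ * ‖(T ^ n) x‖ := by
      rw [pow_succ' T (n + 1), pow_succ' T n]; rfl
    _ ≤ (‖T ^ (n + 2)‖ * ‖x‖) * (‖T ^ n‖ * ‖x‖) := by gcongr <;> exact le_opNorm _ _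
    _ = ‖T ^ (n + 2)‖ * ‖T ^ n‖ * ‖x‖ ^ 2 := by ring

theorem ContinuousLinearMap.IsHyponormal.norm_pow {T : E →L[𝕜] E}
    (hT : T.IsHyponormal) (n : ℕ) (hn : 1 ≤ n) :
    ‖T ^ n‖ = ‖T‖ ^ n := by
  simpa using eq_pow_of_sq_succ_le_mul (a := fun n ↦ ‖T ^ n‖) (fun _ ↦ norm_nonneg _)
    (by rw [pow_zero]; exact norm_id_le) (fun n ↦ by simpa [pow_succ'] using norm_mul_le T (T ^ n))
    hT.sq_norm_pow_succ_le n hn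

end InnerProductSpace

theorem stmt_16 {H : Type*} [NormedAddCommGroup H] [InnerProductSpace ℂ H] [CompleteSpace H]
    (X : H →L[ℂ] H) (hX : (adjoint X * X - X * adjoint X).IsPositive) :
    (∀ n : ℕ, 1 ≤ n → ‖X ^ n‖ = ‖X‖ ^ n) ∧ spectralRadius ℂ X = (‖X‖₊ : ENNReal) := by
  have hX : X.IsHyponormal := hX
  exact ⟨hX.norm_pow, spectralRadius_eq_nnnorm_of_norm_pow hX.norm_pow⟩
end

section
/- Let F1 and F2 be bounded operators on a Hilbert space D with F1·F2 = F2·F1 and F1·F1* − F1*·F1 = F2·F2* − F2*·F2. Define the operator E1 on the Hilbert space ℓ²(D) (square-summable D-valued sequences) by the lower-bidiagonal block matrix with F1 on the diagonal and F2* on the first subdiagonal, and E2 with F2 on the diagonal and F1* on the first subdiagonal. Then E1 and E2 commute. -/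
/-!
Both `E1` and `E2` are lower bidiagonal. The product of the bidiagonal operators with entries
`(A, B)` and `(C, D)` (diagonal, subdiagonal) is tridiagonal with entries `A C`, `B C + A D`,
`B D`, so `E1 E2 = E2 E1` reduces to `F1 F2 = F2 F1`, its adjoint `F2* F1* = F1* F2*`, and the
hypothesis on `F1`, `F2` rearranged as `F2* F2 + F1 F1* = F1* F1 + F2 F2*`.
-/

open ContinuousLinearMap

section Bidiagonal

variable {R M : Type*} [Semiring R] [AddCommMonoid M] [Module R M]

def bidiagonal (A B : Module.End R M) (x : ℕ → M) : ℕ → M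
  | 0 => A (x 0)
  | n + 1 => B (x n) + A (x (n + 1))

theorem eq_bidiagonal {A B : Module.End R M} {x y : ℕ → M} (h₀ : y 0 = A (x 0))
    (h : ∀ n, y (n + 1) = B (x n) + A (x (n + 1))) : y = bidiagonal A B x :=
  funext fun
    | 0 => h₀
    | n + 1 => h n

variable (A B C D : Module.End R M) (x : ℕ → M)

theorem bidiagonal_bidiagonal_zero : bidiagonal A B (bidiagonal C D x) 0 = (A * C) (x 0) := rfl

theorem bidiagonal_bidiagonal_one :
    bidiagonal A B (bidiagonal C D x) 1 = (B * C + A * D) (x 0) + (A * C) (x 1) := by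
  simp only [bidiagonal, Module.End.mul_apply, LinearMap.add_apply, map_add, add_assoc]

theorem bidiagonal_bidiagonal_add_two (n : ℕ) :
    bidiagonal A B (bidiagonal C D x) (n + 2) =
      (B * D) (x n) + (B * C + A * D) (x (n + 1)) + (A * C) (x (n + 2)) := by
  simp only [bidiagonal, Module.End.mul_apply, LinearMap.add_apply, map_add, add_assoc]

variable {A B C D}

theorem bidiagonal_comm (hAC : A * C = C * A) (hBD : B * D = D * B)
    (hmix : B * C + A * D = D * A + C * B) :
    bidiagonal A B (bidiagonal C D x) = bidiagonal C D (bidiagonal A B x) := by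
  funext n
  match n with
  | 0 => simp only [bidiagonal_bidiagonal_zero, hAC]
  | 1 => simp only [bidiagonal_bidiagonal_one, hAC, hmix]
  | n + 2 => simp only [bidiagonal_bidiagonal_add_two, hAC, hBD, hmix]

end Bidiagonal

theorem stmt_19 {D : Type*} [NormedAddCommGroup D] [InnerProductSpace ℂ D] [CompleteSpace D]
    (F1 F2 : D →L[ℂ] D)
    (hcomm : F1 * F2 = F2 * F1)
    (hself : F1 * adjoint F1 - adjoint F1 * F1 = F2 * adjoint F2 - adjoint F2 * F2)
    (E1 E2 : lp (fun _ : ℕ => D) 2 →L[ℂ] lp (fun _ : ℕ => D) 2)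
    (hE1₀ : ∀ x : lp (fun _ : ℕ => D) 2, (E1 x : ∀ _ : ℕ, D) 0 = F1 ((x : ∀ _ : ℕ, D) 0))
    (hE1 : ∀ (x : lp (fun _ : ℕ => D) 2) (n : ℕ),
      (E1 x : ∀ _ : ℕ, D) (n + 1)
        = adjoint F2 ((x : ∀ _ : ℕ, D) n) + F1 ((x : ∀ _ : ℕ, D) (n + 1)))
    (hE2₀ : ∀ x : lp (fun _ : ℕ => D) 2, (E2 x : ∀ _ : ℕ, D) 0 = F2 ((x : ∀ _ : ℕ, D) 0))
    (hE2 : ∀ (x : lp (fun _ : ℕ => D) 2) (n : ℕ),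
      (E2 x : ∀ _ : ℕ, D) (n + 1)
        = adjoint F1 ((x : ∀ _ : ℕ, D) n) + F2 ((x : ∀ _ : ℕ, D) (n + 1))) :
    E1 * E2 = E2 * E1 := by
  have hadj : adjoint F2 * adjoint F1 = adjoint F1 * adjoint F2 := by
    simp only [← star_eq_adjoint, ← star_mul, hcomm]
  have hmix : adjoint F2 * F2 + F1 * adjoint F1 = adjoint F1 * F1 + F2 * adjoint F2 := by
    rw [add_comm, sub_eq_sub_iff_add_eq_add.mp hself, add_comm]
  set L := toLinearMapRingHom (M₁ := D) (R₁ := ℂ)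
  have hE1' : ∀ x, ⇑(E1 x) = bidiagonal (L F1) (L (adjoint F2)) x :=
    fun x => eq_bidiagonal (hE1₀ x) (hE1 x)
  have hE2' : ∀ x, ⇑(E2 x) = bidiagonal (L F2) (L (adjoint F1)) x :=
    fun x => eq_bidiagonal (hE2₀ x) (hE2 x)
  ext x : 1
  refine lp.ext ?_
  simp only [mul_apply_eq_comp, hE1', hE2']
  exact bidiagonal_comm _ (by simp only [← map_mul, hcomm]) (by simp only [← map_mul, hadj])
    (by simp only [← map_mul, ← map_add, hmix])
end
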